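/- Let q be a prime power and let k, n, n' be integers with k ≤ n ≤ n' ≤ (q^k−1)/(q−1). Then m_q(n,k) ≤ m_q(n',k). -/

import Mathlib

open scoped Classical
open Matrix

/-- The support of a word. -/
def wordSupp {F : Type} [Field F] {n : ℕ} (c : Fin n → F) : Set (Fin n) :=
  {i | c i ≠ 0}

/-- A nonzero codeword of `C` is minimal if no nonzero codeword of `C` has support
properly contained in its support. -/
def IsMinimalCodeword {F : Type} [Field F] {n : ℕ}
    (C : Submodule F (Fin n → F)) (c : Fin n → F) : Prop :=
  c ∈ C ∧ c ≠ 0 ∧ ∀ c' ∈ C, c' ≠ 0 → ¬ wordSupp c' ⊂ wordSupp c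

/-- The number of minimal codewords of `C`, counted up to equivalence (i.e. up to
multiplication by a nonzero scalar). -/
noncomputable def numMinimal {F : Type} [Field F] {n : ℕ}
    (C : Submodule F (Fin n → F)) : ℕ :=
  Nat.card (Quot (fun c c' : {c : Fin n → F // IsMinimalCodeword C c} =>
    ∃ a : Fˣ, a • c.1 = c'.1))

/-- A code is projective if no coordinate vanishes identically and no two distinct
coordinates agree up to a nonzero scalar factor on all of `C`. -/
def IsProjective {F : Type} [Field F] {n : ℕ} (C : Submodule F (Fin n → F)) : Prop :=
  (∀ i : Fin n, ∃ c ∈ C, c i ≠ 0) ∧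
  ∀ i j : Fin n, i ≠ j → ¬ ∃ a : F, a ≠ 0 ∧ ∀ c ∈ C, c j = a * c i

/-- `mMin F n k` : the minimum of `numMinimal C` over all projective `[n,k]` codes over `F`. -/
noncomputable def mMin (F : Type) [Field F] [Fintype F] (n k : ℕ) : ℕ :=
  sInf {m | ∃ C : Submodule F (Fin n → F),
    Module.finrank F C = k ∧ IsProjective C ∧ numMinimal C = m}

/-- `alphaQ F k r` : minimum cardinality of a set `S` of points (1-dimensional subspaces)
of `F^k` for which there are `r` distinct hyperplanes `H i` and codimension-2 subspaces
`U i ≤ H i` such that every point lying on some `H i` but not on `U i` belongs to `S`. -/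
noncomputable def alphaQ (F : Type) [Field F] [Fintype F] (k r : ℕ) : ℕ :=
  sInf {m | ∃ S : Set (Submodule F (Fin k → F)), S.ncard = m ∧
    ∃ H U : Fin r → Submodule F (Fin k → F),
      Function.Injective H ∧
      (∀ i, Module.finrank F (H i) = k - 1) ∧
      (∀ i, Module.finrank F (U i) = k - 2) ∧
      (∀ i, U i ≤ H i) ∧
      ∀ P : Submodule F (Fin k → F), Module.finrank F P = 1 →
        (∃ i, P ≤ H i ∧ ¬ P ≤ U i) → P ∈ S}

/-- The minimum Hamming weight of a code. -/
noncomputable def minDist {F : Type} [Field F] {n : ℕ} (C : Submodule F (Fin n → F)) : ℕ :=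
  sInf {w | ∃ c ∈ C, c ≠ 0 ∧ (wordSupp c).ncard = w}

/-- The support of a subcode. -/
def subcodeSupp {F : Type} [Field F] {n : ℕ} (D : Submodule F (Fin n → F)) : Set (Fin n) :=
  {i | ∃ v ∈ D, v i ≠ 0}

/-- An `l`-dimensional subcode `D` of `C` is support-minimal if no `l`-dimensional subcode
of `C` has support properly contained in `supp D`. -/
def IsSupportMinimal {F : Type} [Field F] {n : ℕ}
    (C D : Submodule F (Fin n → F)) (l : ℕ) : Prop :=
  D ≤ C ∧ Module.finrank F D = l ∧
  ∀ D' : Submodule F (Fin n → F), D' ≤ C → Module.finrank F D' = l →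
    ¬ subcodeSupp D' ⊂ subcodeSupp D

/-- The `l`-th generalized Hamming weight of `C`. -/
noncomputable def genWeight {F : Type} [Field F] {n : ℕ}
    (C : Submodule F (Fin n → F)) (l : ℕ) : ℕ :=
  sInf {w | ∃ D : Submodule F (Fin n → F), D ≤ C ∧ Module.finrank F D = l ∧
    (subcodeSupp D).ncard = w}

/-- The number of support-minimal `l`-dimensional subcodes of `C`. -/
noncomputable def numSupportMinimal {F : Type} [Field F] {n : ℕ}
    (C : Submodule F (Fin n → F)) (l : ℕ) : ℕ :=
  Nat.card {D : Submodule F (Fin n → F) // IsSupportMinimal C D l}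

/-- The Gaussian binomial coefficient `[k choose l]_q`. -/
def gaussBinom (q k l : ℕ) : ℕ :=
  (∏ i ∈ Finset.range l, (q ^ (k - i) - 1)) / (∏ i ∈ Finset.range l, (q ^ (i + 1) - 1))

/-- `alphaL F k l r` : the analogue of `alphaQ` for codimension `l`. -/
noncomputable def alphaL (F : Type) [Field F] [Fintype F] (k l r : ℕ) : ℕ :=
  sInf {m | ∃ S : Set (Submodule F (Fin k → F)), S.ncard = m ∧
    ∃ W U : Fin r → Submodule F (Fin k → F),
      Function.Injective W ∧
      (∀ i, Module.finrank F (W i) = k - l) ∧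
      (∀ i, Module.finrank F (U i) = k - (l + 1)) ∧
      (∀ i, U i ≤ W i) ∧
      ∀ P : Submodule F (Fin k → F), Module.finrank F P = 1 →
        (∃ i, P ≤ W i ∧ ¬ P ≤ U i) → P ∈ S}

/-!
Puncture a projective `[n + 1, k]` code at a coordinate `i` for which the unit vector `eᵢ` is
not a codeword (one exists since `k < n + 1`): the puncturing is injective on the code, so it
keeps the dimension, and it keeps projectivity. A minimal support of the punctured code is the
trace of a minimal support of the original code (take a codeword of minimal support among those
whose puncturing is supported inside it), and minimal codewords are determined up to a scalar by
their supports, so puncturing does not increase the number of minimal codewords. Applying this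
`n' - n` times to an optimal `[n', k]` code gives the inequality; such a code exists because
`PG(k - 1, q)` has `(q ^ k - 1) / (q - 1)` points, so we may take `n'` distinct points including
the `k` coordinate points as the columns of a generator matrix.
-/

open Module Submodule LinearMap
open scoped LinearAlgebra.Projectivization

section MinimalCodewords

variable {F : Type} [Field F] {n : ℕ} {C : Submodule F (Fin n → F)}

lemma wordSupp_smul {a : F} (ha : a ≠ 0) (c : Fin n → F) : wordSupp (a • c) = wordSupp c := by
  ext i
  simp [wordSupp, ha]

lemma IsMinimalCodeword.exists_smul_eq {c c' : Fin n → F} (hc : IsMinimalCodeword C c)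
    (hc'C : c' ∈ C) (hc'0 : c' ≠ 0) (hsupp : wordSupp c' ⊆ wordSupp c) :
    ∃ a : F, a ≠ 0 ∧ a • c = c' := by
  obtain ⟨hcC, hc0, hcmin⟩ := hc
  have hsupp_eq : wordSupp c' = wordSupp c :=
    (Set.eq_or_ssubset_of_subset hsupp).resolve_right (hcmin c' hc'C hc'0)
  obtain ⟨j, hj⟩ := Function.ne_iff.mp hc0
  have hj' : c' j ≠ 0 := by
    change j ∈ wordSupp c'
    rw [hsupp_eq]
    exact hj
  set a := c' j / c j
  -- `c' - a • c` vanishes at `j`, so its support is strictly smaller than that of `c`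
  have hdiff : c' - a • c = 0 := by
    by_contra hne
    refine hcmin _ (sub_mem hc'C (smul_mem _ _ hcC)) hne
      ((Set.ssubset_iff_of_subset ?_).mpr ⟨j, hj, ?_⟩)
    · intro l hl
      by_contra hcl
      have hc'l : c' l = 0 := not_not.mp fun h => hcl (hsupp h)
      exact hl (by simp [hc'l, not_not.mp hcl])
    · simp [wordSupp, a, div_mul_cancel₀ _ hj]
  exact ⟨a, div_ne_zero hj' hj, (sub_eq_zero.mp hdiff).symm⟩

def minimalSupports (C : Submodule F (Fin n → F)) : Set (Set (Fin n)) :=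
  {s | ∃ c, IsMinimalCodeword C c ∧ wordSupp c = s}

lemma numMinimal_eq_ncard_minimalSupports (C : Submodule F (Fin n → F)) :
    numMinimal C = (minimalSupports C).ncard := by
  let Φ : Quot (fun c c' : {c // IsMinimalCodeword C c} => ∃ a : Fˣ, a • c.1 = c'.1) →
      Set (Fin n) :=
    Quot.lift (fun c => wordSupp c.1) (by
      rintro c c' ⟨a, hac⟩
      rw [← hac, Units.smul_def, wordSupp_smul a.ne_zero])
  have hΦ : Function.Injective Φ := by
    rintro ⟨c⟩ ⟨c'⟩ h
    obtain ⟨a, ha, hac⟩ := c.2.exists_smul_eq c'.2.1 c'.2.2.1 h.symm.subset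
    exact Quot.sound ⟨Units.mk0 a ha, hac⟩
  have hrange : Set.range Φ = minimalSupports C := by
    ext s
    constructor
    · rintro ⟨⟨c⟩, rfl⟩
      exact ⟨c.1, c.2, rfl⟩
    · rintro ⟨c, hc, rfl⟩
      exact ⟨Quot.mk _ ⟨c, hc⟩, rfl⟩
  rw [numMinimal, ← hrange, Set.ncard_range_of_injective hΦ]

end MinimalCodewords

section Puncturing

variable {F : Type} [Field F] {n n' : ℕ} {C : Submodule F (Fin n' → F)} {e : Fin n → Fin n'}

lemma minimalSupports_map_funLeft_subset (hC : Disjoint C (ker (funLeft F F e))) :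
    minimalSupports (C.map (funLeft F F e)) ⊆ (e ⁻¹' ·) '' minimalSupports C := by
  rintro _ ⟨c, ⟨hcC, hc0, hcmin⟩, rfl⟩
  -- a codeword of `C` with support minimal among those punctured into `wordSupp c`
  set T := {d ∈ C | d ≠ 0 ∧ e ⁻¹' wordSupp d ⊆ wordSupp c}
  obtain ⟨d₀, hd₀C, rfl⟩ := mem_map.mp hcC
  have hT : T.Nonempty := ⟨d₀, hd₀C, by rintro rfl; simp at hc0, subset_rfl⟩
  obtain ⟨d, ⟨hdC, hd0, hdc⟩, hdmin⟩ := (InvImage.wf wordSupp wellFounded_lt).has_min T hT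
  have hd_min : IsMinimalCodeword C d :=
    ⟨hdC, hd0, fun d' hd'C hd'0 hd'd =>
      hdmin d' ⟨hd'C, hd'0, (Set.preimage_mono hd'd.subset).trans hdc⟩ hd'd⟩
  have hπd0 : funLeft F F e d ≠ 0 := fun h => hd0 (disjoint_def.mp hC d hdC h)
  have hsupp : e ⁻¹' wordSupp d = wordSupp (funLeft F F e d₀) :=
    (Set.eq_or_ssubset_of_subset hdc).resolve_right (hcmin _ (mem_map_of_mem hdC) hπd0)
  exact ⟨wordSupp d, ⟨d, hd_min, rfl⟩, hsupp⟩

lemma numMinimal_map_funLeft_le (hC : Disjoint C (ker (funLeft F F e))) :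
    numMinimal (C.map (funLeft F F e)) ≤ numMinimal C := by
  rw [numMinimal_eq_ncard_minimalSupports, numMinimal_eq_ncard_minimalSupports]
  exact (Set.ncard_le_ncard (minimalSupports_map_funLeft_subset hC) (Set.toFinite _)).trans
    (Set.ncard_image_le (Set.toFinite _))

lemma finrank_map_funLeft (hC : Disjoint C (ker (funLeft F F e))) :
    finrank F (C.map (funLeft F F e)) = finrank F C := by
  rw [← range_domRestrict]
  exact finrank_range_of_inj (injective_domRestrict_iff.mpr hC)

lemma IsProjective.map_funLeft (hC : IsProjective C) (he : Function.Injective e) :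
    IsProjective (C.map (funLeft F F e)) := by
  refine ⟨fun l => ?_, fun l₁ l₂ hl ⟨a, ha, hall⟩ => ?_⟩
  · obtain ⟨c, hcC, hc⟩ := hC.1 (e l)
    exact ⟨_, mem_map_of_mem hcC, hc⟩
  · exact hC.2 (e l₁) (e l₂) (he.ne hl) ⟨a, ha, fun c hc => hall _ (mem_map_of_mem hc)⟩

lemma funLeft_succAbove_eq_zero_iff {i : Fin (n + 1)} {c : Fin (n + 1) → F} :
    funLeft F F i.succAbove c = 0 ↔ c = c i • Pi.single i 1 := by
  constructor
  · intro h
    funext j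
    rcases Fin.eq_self_or_eq_succAbove i j with rfl | ⟨l, rfl⟩
    · simp
    · simpa [Fin.succAbove_ne] using congrFun h l
  · intro h
    funext l
    rw [funLeft_apply, h]
    simp [Fin.succAbove_ne]

lemma exists_disjoint_ker_funLeft_succAbove {C : Submodule F (Fin (n + 1) → F)} (hC : C ≠ ⊤) :
    ∃ i : Fin (n + 1), Disjoint C (ker (funLeft F F i.succAbove)) := by
  by_contra! h
  refine hC (eq_top_iff.mpr ?_)
  rw [← (Pi.basisFun F (Fin (n + 1))).span_eq, span_le]
  rintro _ ⟨i, rfl⟩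
  obtain ⟨c, hcC, hc, hc0⟩ : ∃ c ∈ C, funLeft F F i.succAbove c = 0 ∧ c ≠ 0 := by
    simpa [disjoint_def] using h i
  have hci := funLeft_succAbove_eq_zero_iff.mp hc
  generalize c i = a at hci
  subst hci
  have ha : a ≠ 0 := by
    rintro rfl
    simp at hc0
  rw [Pi.basisFun_apply]
  exact (smul_mem_iff C ha).mp hcC

lemma exists_puncture_le {k : ℕ} (hk : k ≤ n) {C : Submodule F (Fin (n + 1) → F)}
    (hCk : finrank F C = k) (hC : IsProjective C) :
    ∃ D : Submodule F (Fin n → F),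
      finrank F D = k ∧ IsProjective D ∧ numMinimal D ≤ numMinimal C := by
  have hCtop : C ≠ ⊤ := by
    rintro rfl
    rw [finrank_top, finrank_fin_fun] at hCk
    omega
  obtain ⟨i, hi⟩ := exists_disjoint_ker_funLeft_succAbove hCtop
  exact ⟨_, (finrank_map_funLeft hi).trans hCk, hC.map_funLeft Fin.succAbove_right_injective,
    numMinimal_map_funLeft_le hi⟩

lemma exists_isProjective_numMinimal_le {k n n' : ℕ} (hkn : k ≤ n) (hnn' : n ≤ n')
    {C : Submodule F (Fin n' → F)} (hCk : finrank F C = k) (hC : IsProjective C) :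
    ∃ D : Submodule F (Fin n → F),
      finrank F D = k ∧ IsProjective D ∧ numMinimal D ≤ numMinimal C := by
  induction n', hnn' using Nat.le_induction with
  | base => exact ⟨C, hCk, hC, le_rfl⟩
  | succ n' hnn' ih =>
    obtain ⟨D', hD'k, hD', hD'C⟩ := exists_puncture_le (hkn.trans hnn') hCk hC
    obtain ⟨D, hDk, hD, hDD'⟩ := ih hD'k hD'
    exact ⟨D, hDk, hD, hDD'.trans hD'C⟩

end Puncturing

section PointCodes

variable {F : Type} [Field F] {k m : ℕ}

/-- The code whose generator matrix has the representatives `(p i).rep` as its columns. -/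
noncomputable def pointCode (p : Fin m → ℙ F (Fin k → F)) : Submodule F (Fin m → F) :=
  range (Matrix.of fun i => (p i).rep).mulVecLin

lemma isProjective_pointCode {p : Fin m → ℙ F (Fin k → F)} (hp : Function.Injective p) :
    IsProjective (pointCode p) := by
  refine ⟨fun i => ?_, fun i j hij ⟨a, ha, hall⟩ => hij (hp ?_).symm⟩
  · obtain ⟨t, ht⟩ := Function.ne_iff.mp (p i).rep_nonzero
    exact ⟨_, mem_range_self _ (Pi.single t 1), by simpa using ht⟩
  · have hji : (p j).rep = a • (p i).rep := funext fun t => by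
      simpa using hall _ (mem_range_self _ (Pi.single t 1))
    rw [← (p j).mk_rep, ← (p i).mk_rep, Projectivization.mk_eq_mk_iff']
    exact ⟨a, hji.symm⟩

lemma finrank_pointCode {p : Fin m → ℙ F (Fin k → F)}
    (hp : ∀ t, ∃ i, p i = Projectivization.mk F (Pi.single t (1 : F)) (by simp)) :
    finrank F (pointCode p) = k := by
  have hspan : span F (Set.range (Matrix.of fun i => (p i).rep).row) = ⊤ := by
    rw [eq_top_iff, ← (Pi.basisFun F (Fin k)).span_eq, span_le]
    rintro _ ⟨t, rfl⟩
    obtain ⟨i, hi⟩ := hp t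
    obtain ⟨a, ha⟩ := Projectivization.exists_smul_eq_mk_rep F
      (Pi.single t (1 : F) : Fin k → F) (by simp)
    rw [Pi.basisFun_apply, SetLike.mem_coe, ← smul_mem_iff _ a.ne_zero, ← Units.smul_def, ha,
      ← hi]
    exact subset_span ⟨i, rfl⟩
  rw [pointCode, ← Matrix.rank, Matrix.rank_eq_finrank_span_row, hspan, finrank_top,
    finrank_fin_fun]

lemma exists_injective_points [Finite F] (hk : k ≤ m)
    (hm : m ≤ (Nat.card F ^ k - 1) / (Nat.card F - 1)) :
    ∃ p : Fin m → ℙ F (Fin k → F), Function.Injective p ∧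
      ∀ t, ∃ i, p i = Projectivization.mk F (Pi.single t (1 : F)) (by simp) := by
  let basisPoint (t : Fin k) : ℙ F (Fin k → F) :=
    Projectivization.mk F (Pi.single t (1 : F)) (by simp)
  have hbasisPoint : Function.Injective basisPoint := by
    intro t t' h
    obtain ⟨a, ha⟩ := (Projectivization.mk_eq_mk_iff' F _ _ _ _).mp h
    by_contra htt'
    simpa [Pi.single_apply, htt'] using congrFun ha t
  obtain ⟨u, hbasis_u, -, hu⟩ :=
    Set.exists_subsuperset_card_eq (n := m) (Set.subset_univ (Set.range basisPoint))
      (by rwa [Set.ncard_range_of_injective hbasisPoint, Nat.card_fin])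
      (by rwa [Set.ncard_univ, Projectivization.card'', Nat.card_fun, Nat.card_fin])
  obtain ⟨e⟩ : Nonempty (Fin m ≃ u) :=
    Finite.card_eq.mp (by rw [Nat.card_fin, Nat.card_coe_set_eq, hu])
  exact ⟨fun i => e i, Subtype.val_injective.comp e.injective,
    fun t => ⟨e.symm ⟨_, hbasis_u ⟨t, rfl⟩⟩, by simp [basisPoint]⟩⟩

theorem exists_isProjective_finrank_eq [Finite F] (hk : k ≤ m)
    (hm : m ≤ (Nat.card F ^ k - 1) / (Nat.card F - 1)) :
    ∃ C : Submodule F (Fin m → F), finrank F C = k ∧ IsProjective C := by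
  obtain ⟨p, hp, hbasis⟩ := exists_injective_points hk hm
  exact ⟨pointCode p, finrank_pointCode hbasis, isProjective_pointCode hp⟩

end PointCodes

/-- `m_q(n,k)` is monotone in `n`: for `k ≤ n ≤ n' ≤ (q^k-1)/(q-1)` one has
`m_q(n,k) ≤ m_q(n',k)`. -/
theorem statement_19 {F : Type} [Field F] [Fintype F] {q n n' k : ℕ}
    (hq : Fintype.card F = q)
    (hkn : k ≤ n) (hnn' : n ≤ n') (hn' : n' ≤ (q ^ k - 1) / (q - 1)) :
    mMin F n k ≤ mMin F n' k := by
  rw [← hq, ← Nat.card_eq_fintype_card] at hn'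
  obtain ⟨C₀, hC₀k, hC₀⟩ := exists_isProjective_finrank_eq (hkn.trans hnn') hn'
  have hne : {m | ∃ C : Submodule F (Fin n' → F),
      finrank F C = k ∧ IsProjective C ∧ numMinimal C = m}.Nonempty :=
    ⟨_, C₀, hC₀k, hC₀, rfl⟩
  obtain ⟨C, hCk, hC, hCmin⟩ := Nat.sInf_mem hne
  obtain ⟨D, hDk, hD, hDC⟩ := exists_isProjective_numMinimal_le hkn hnn' hCk hC
  calc mMin F n k ≤ numMinimal D := Nat.sInf_le ⟨D, hDk, hD, rfl⟩
    _ ≤ numMinimal C := hDC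
    _ = mMin F n' k := hCmin
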